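/- arXiv:0812.0730 — 2 statements merged into one kernel-verified Lean document; each statement's English description precedes it below -/
import Mathlib

section
/- Let α > -1, a ≠ -1, and n ≥ 1. Define R_n(x) = L_n^α(x) + a·L_n^{α+1}(x). If z and z' are consecutive zeros of L_{n-1}^{α+1}, then R_n(z)·R_n(z') < 0; hence the zeros of R_n interlace with the zeros of L_{n-1}^{α+1}. -/
open Finset

/-- Generalized Laguerre polynomial `L_n^α(x) = ∑_{k=0}^n (-1)^k C(n+α, n-k) x^k / k!`,
where `C(n+α, n-k) = (∏_{i=1}^{n-k} (α+k+i)) / (n-k)!`. -/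
noncomputable def laguerre (α : ℝ) (n : ℕ) (x : ℝ) : ℝ :=
  ∑ k ∈ Finset.range (n + 1),
    (-1 : ℝ) ^ k * (∏ i ∈ Finset.range (n - k), (α + k + 1 + i)) /
      ((Nat.factorial (n - k) : ℝ) * (Nat.factorial k : ℝ)) * x ^ k

/-!
Put `β = α + 1`, `p = L_{n-1}^β` and `q = L_n^β`. Since `L_n^α = L_n^β - L_{n-1}^β`, we have
`R_n = (1 + a) q - p`. The three-term recurrence gives
`(m + 2) W_{m+1} = (m + 1 + β) W_m - (L_{m+1}^β)²` for the Wronskian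
`W_m = W(L_m^β, L_{m+1}^β)`, and `W_0 = -1`, so `W(p, q) < 0` everywhere when `β > -1`.
At a zero `r` of `p` this says `p'(r) q(r) > 0`; since `p'` cannot have the same strict sign at
two consecutive zeros of `p`, `q` and hence `R_n` change sign between them. Finally
`(q / p)' = W(p, q) / p² < 0`, so `q / p` is strictly decreasing between the zeros and takes the
value `1 / (1 + a)`, i.e. `R_n` vanishes, only once.
-/

open Polynomial Set
open scoped Nat

theorem exists_mem_Ioo_eq_zero_of_mul_neg {α : Type*} [ConditionallyCompleteLinearOrder α]
    [TopologicalSpace α] [OrderTopology α] [DenselyOrdered α] {f : α → ℝ} {a b : α}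
    (hab : a ≤ b) (hf : ContinuousOn f (Icc a b)) (h : f a * f b < 0) :
    ∃ c ∈ Ioo a b, f c = 0 := by
  rcases mul_neg_iff.mp h with ⟨ha, hb⟩ | ⟨ha, hb⟩
  · exact intermediate_value_Ioo' hab hf ⟨hb, ha⟩
  · exact intermediate_value_Ioo hab hf ⟨ha, hb⟩

namespace Polynomial

theorem eval_derivative_mul_nonpos_of_consecutive_roots {p : ℝ[X]} {z z' : ℝ} (hlt : z < z')
    (hz : p.IsRoot z) (hz' : p.IsRoot z') (hne : ∀ u ∈ Ioo z z', p.eval u ≠ 0) :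
    (derivative p).eval z * (derivative p).eval z' ≤ 0 := by
  obtain ⟨s, rfl⟩ : (X - C z) * (X - C z') ∣ p :=
    (isCoprime_X_sub_C_of_isUnit_sub (sub_ne_zero.mpr hlt.ne).isUnit).mul_dvd
      (dvd_iff_isRoot.mpr hz) (dvd_iff_isRoot.mpr hz')
  have hs : 0 ≤ s.eval z * s.eval z' := by
    by_contra! hneg
    obtain ⟨u, hu, hsu⟩ := exists_mem_Ioo_eq_zero_of_mul_neg hlt.le s.continuousOn hneg
    exact hne u hu (by simp [hsu])
  have hdz : (derivative ((X - C z) * (X - C z') * s)).eval z = (z - z') * s.eval z := by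
    simp [derivative_mul]
  have hdz' : (derivative ((X - C z) * (X - C z') * s)).eval z' = (z' - z) * s.eval z' := by
    simp [derivative_mul]
  rw [hdz, hdz']
  calc (z - z') * s.eval z * ((z' - z) * s.eval z')
      = -((z' - z) ^ 2 * (s.eval z * s.eval z')) := by ring
    _ ≤ 0 := neg_nonpos.mpr (mul_nonneg (sq_nonneg _) hs)

theorem strictAntiOn_eval_div_of_wronskian_neg {p q : ℝ[X]} {s : Set ℝ} (hs : Convex ℝ s)
    (hp : ∀ x ∈ s, p.eval x ≠ 0) (hW : ∀ x ∈ s, (wronskian p q).eval x < 0) :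
    StrictAntiOn (fun x ↦ q.eval x / p.eval x) s := by
  refine strictAntiOn_of_deriv_neg hs (q.continuousOn.div p.continuousOn hp) fun x hx ↦ ?_
  have hx := interior_subset hx
  rw [((q.hasDerivAt x).fun_div (p.hasDerivAt x) (hp x hx)).deriv]
  refine div_neg_of_neg_of_pos ?_ (pow_two_pos_of_ne_zero (hp x hx))
  simpa [wronskian, mul_comm] using hW x hx

theorem eval_mul_eval_neg_of_wronskian_neg {p q : ℝ[X]} {z z' : ℝ} (hlt : z < z')
    (hz : p.IsRoot z) (hz' : p.IsRoot z') (hne : ∀ u ∈ Ioo z z', p.eval u ≠ 0)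
    (hWz : (wronskian p q).eval z < 0) (hWz' : (wronskian p q).eval z' < 0) :
    q.eval z * q.eval z' < 0 := by
  have hpos : ∀ {r}, p.IsRoot r → (wronskian p q).eval r < 0 →
      0 < (derivative p).eval r * q.eval r := by
    intro r hr hW
    simp only [wronskian, eval_sub, eval_mul, hr.eq_zero, zero_mul, zero_sub] at hW
    linarith
  refine neg_of_mul_pos_right ?_ (eval_derivative_mul_nonpos_of_consecutive_roots hlt hz hz' hne)
  linear_combination mul_pos (hpos hz hWz) (hpos hz' hWz')

theorem eval_C_mul_sub_mul_eval_neg_of_wronskian_neg {p q : ℝ[X]} {z z' c : ℝ} (hc : c ≠ 0)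
    (hlt : z < z') (hz : p.IsRoot z) (hz' : p.IsRoot z') (hne : ∀ u ∈ Ioo z z', p.eval u ≠ 0)
    (hWz : (wronskian p q).eval z < 0) (hWz' : (wronskian p q).eval z' < 0) :
    (C c * q - p).eval z * (C c * q - p).eval z' < 0 := by
  have hq := eval_mul_eval_neg_of_wronskian_neg hlt hz hz' hne hWz hWz'
  simp only [eval_sub, eval_mul, eval_C, hz.eq_zero, hz'.eq_zero, sub_zero]
  linarith [mul_neg_of_pos_of_neg (pow_two_pos_of_ne_zero hc) hq]

theorem existsUnique_mem_Ioo_eval_C_mul_sub_eq_zero_of_wronskian_neg {p q : ℝ[X]} {z z' c : ℝ}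
    (hc : c ≠ 0) (hlt : z < z') (hz : p.IsRoot z) (hz' : p.IsRoot z')
    (hne : ∀ u ∈ Ioo z z', p.eval u ≠ 0)
    (hW : ∀ x ∈ Icc z z', (wronskian p q).eval x < 0) :
    ∃! w, w ∈ Ioo z z' ∧ (C c * q - p).eval w = 0 := by
  obtain ⟨w, hw, hw0⟩ := exists_mem_Ioo_eq_zero_of_mul_neg hlt.le (C c * q - p).continuousOn
    (eval_C_mul_sub_mul_eval_neg_of_wronskian_neg hc hlt hz hz' hne
      (hW z (left_mem_Icc.mpr hlt.le)) (hW z' (right_mem_Icc.mpr hlt.le)))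
  have hanti := strictAntiOn_eval_div_of_wronskian_neg (convex_Ioo z z') hne
    fun x hx ↦ hW x (Ioo_subset_Icc_self hx)
  have hratio : ∀ y ∈ Ioo z z', (C c * q - p).eval y = 0 → q.eval y / p.eval y = c⁻¹ := by
    intro y hy hy0
    have hpy := hne y hy
    simp only [eval_sub, eval_mul, eval_C, sub_eq_zero] at hy0
    rw [← hy0] at hpy ⊢
    field_simp [right_ne_zero_of_mul hpy]
  refine ⟨w, ⟨hw, hw0⟩, fun y ⟨hy, hy0⟩ ↦ hanti.injOn hy hw ?_⟩
  exact (hratio y hy hy0).trans (hratio w hw hw0).symm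

end Polynomial

section Laguerre

variable (β : ℝ)

/-- The coefficient of `X ^ k` in `L_{k+j}^β`: indexing by the gap `j = n - k` keeps truncated
subtraction out of the coefficient identities. -/
noncomputable def laguerreCoeff (k j : ℕ) : ℝ :=
  (-1) ^ k * (∏ i ∈ range j, (β + k + 1 + i)) / ((j ! : ℝ) * k !)

lemma laguerreCoeff_zero_right (k : ℕ) : laguerreCoeff β k 0 = (-1) ^ k / k ! := by
  simp [laguerreCoeff]

lemma laguerreCoeff_succ_right (k j : ℕ) :
    laguerreCoeff β k (j + 1) = laguerreCoeff (β + 1) k (j + 1) - laguerreCoeff (β + 1) k j := by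
  have hshift : ∏ i ∈ range (j + 1), (β + k + 1 + i)
      = (β + k + 1) * ∏ i ∈ range j, (β + 1 + k + 1 + i) := by
    rw [prod_range_succ', mul_comm]
    congr 1
    · simp
    · exact prod_congr rfl fun i _ ↦ by push_cast; ring
  simp only [laguerreCoeff, hshift, prod_range_succ, Nat.factorial_succ]
  push_cast
  field_simp
  ring

lemma laguerreCoeff_absorb (k j : ℕ) :
    laguerreCoeff (β + 1) k (j + 1) =
      (k + j + β + 2) * laguerreCoeff β (k + 1) j
        - (k + j + 2) * laguerreCoeff β (k + 1) (j + 1) := by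
  have hshift : ∀ l : ℕ, ∏ i ∈ range l, (β + 1 + k + 1 + i)
      = ∏ i ∈ range l, (β + ↑(k + 1) + 1 + i) :=
    fun l ↦ prod_congr rfl fun i _ ↦ by push_cast; ring
  simp only [laguerreCoeff, hshift, prod_range_succ, Nat.factorial_succ]
  push_cast
  field_simp
  ring

lemma laguerreCoeff_zero_left_succ (n : ℕ) :
    (n + 1) * laguerreCoeff β 0 (n + 1) = (n + β + 1) * laguerreCoeff β 0 n := by
  simp only [laguerreCoeff, prod_range_succ, Nat.factorial_succ]
  push_cast
  field_simp
  ring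

noncomputable def laguerrePoly (n : ℕ) : ℝ[X] :=
  ∑ k ∈ range (n + 1), C (laguerreCoeff β k (n - k)) * X ^ k

lemma laguerre_eq_eval (n : ℕ) (x : ℝ) : laguerre β n x = (laguerrePoly β n).eval x := by
  simp [laguerre, laguerrePoly, laguerreCoeff, eval_finsetSum]

lemma coeff_laguerrePoly_of_le {k n : ℕ} (h : k ≤ n) :
    (laguerrePoly β n).coeff k = laguerreCoeff β k (n - k) := by
  simp [laguerrePoly, coeff_C_mul, coeff_X_pow, Nat.lt_succ_iff.mpr h]

lemma coeff_laguerrePoly_of_lt {k n : ℕ} (h : n < k) : (laguerrePoly β n).coeff k = 0 := by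
  simp [laguerrePoly, coeff_C_mul, coeff_X_pow, h.not_ge]

lemma laguerrePoly_succ (n : ℕ) :
    laguerrePoly β (n + 1) = laguerrePoly (β + 1) (n + 1) - laguerrePoly (β + 1) n := by
  ext k
  rw [coeff_sub]
  rcases lt_trichotomy k (n + 1) with hk | rfl | hk
  · have hkn := Nat.lt_succ_iff.mp hk
    rw [coeff_laguerrePoly_of_le _ hk.le, coeff_laguerrePoly_of_le _ hk.le,
      coeff_laguerrePoly_of_le _ hkn, Nat.sub_add_comm hkn]
    exact laguerreCoeff_succ_right β k (n - k)
  · simp [coeff_laguerrePoly_of_le, coeff_laguerrePoly_of_lt, laguerreCoeff_zero_right]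
  · simp [coeff_laguerrePoly_of_lt, hk, (Nat.lt_succ_self n).trans hk]

lemma X_mul_laguerrePoly_add_one (n : ℕ) :
    X * laguerrePoly (β + 1) n =
      C (n + β + 1) * laguerrePoly β n - C (n + 1 : ℝ) * laguerrePoly β (n + 1) := by
  ext r
  rw [coeff_sub, coeff_C_mul, coeff_C_mul]
  rcases r with _ | k
  · rw [coeff_X_mul_zero, coeff_laguerrePoly_of_le _ (Nat.zero_le _),
      coeff_laguerrePoly_of_le _ (Nat.zero_le _), Nat.sub_zero, Nat.sub_zero,
      laguerreCoeff_zero_left_succ, sub_self]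
  · rw [coeff_X_mul]
    rcases lt_trichotomy k n with hk | rfl | hk
    · obtain ⟨j, rfl⟩ := Nat.exists_eq_add_of_lt hk
      rw [coeff_laguerrePoly_of_le _ hk.le, coeff_laguerrePoly_of_le _ (by omega),
        coeff_laguerrePoly_of_le _ (by omega), show k + j + 1 - k = j + 1 by omega,
        show k + j + 1 - (k + 1) = j by omega, show k + j + 1 + 1 - (k + 1) = j + 1 by omega,
        laguerreCoeff_absorb]
      push_cast
      ring
    · rw [coeff_laguerrePoly_of_le _ le_rfl, coeff_laguerrePoly_of_lt _ (Nat.lt_succ_self k),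
        coeff_laguerrePoly_of_le _ le_rfl, Nat.sub_self, Nat.sub_self, laguerreCoeff_zero_right,
        laguerreCoeff_zero_right, Nat.factorial_succ]
      push_cast
      field_simp
      ring
    · rw [coeff_laguerrePoly_of_lt _ hk, coeff_laguerrePoly_of_lt _ (by omega),
        coeff_laguerrePoly_of_lt _ (by omega)]
      ring

lemma laguerrePoly_three_term (m : ℕ) :
    C ((m : ℝ) + 2) * laguerrePoly β (m + 2) =
      (C (2 * m + 3 + β) - X) * laguerrePoly β (m + 1) - C (m + 1 + β) * laguerrePoly β m := by
  have h₁ := X_mul_laguerrePoly_add_one β (m + 1)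
  have h₀ := X_mul_laguerrePoly_add_one β m
  have hp := laguerrePoly_succ β m
  simp only [map_add, map_mul, map_natCast, map_one, map_ofNat, Nat.cast_add, Nat.cast_one] at *
  linear_combination h₁ - h₀ + X * hp

lemma laguerrePoly_zero : laguerrePoly β 0 = 1 := by
  simp [laguerrePoly, laguerreCoeff]

lemma laguerrePoly_one : laguerrePoly β 1 = C (β + 1) - X := by
  simp [laguerrePoly, laguerreCoeff, sum_range_succ]
  ring

lemma wronskian_laguerrePoly_succ (m : ℕ) :
    C ((m : ℝ) + 2) * wronskian (laguerrePoly β (m + 1)) (laguerrePoly β (m + 2)) =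
      C (m + 1 + β) * wronskian (laguerrePoly β m) (laguerrePoly β (m + 1))
        - laguerrePoly β (m + 1) ^ 2 := by
  have h := laguerrePoly_three_term β m
  have h' := congrArg derivative h
  simp only [derivative_mul, derivative_C, derivative_sub, derivative_X, zero_mul, zero_add,
    zero_sub] at h'
  unfold wronskian
  linear_combination laguerrePoly β (m + 1) * h' - derivative (laguerrePoly β (m + 1)) * h

theorem eval_wronskian_laguerrePoly_neg (hβ : -1 < β) (m : ℕ) (x : ℝ) :
    (wronskian (laguerrePoly β m) (laguerrePoly β (m + 1))).eval x < 0 := by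
  induction m with
  | zero => simp [wronskian, laguerrePoly_zero, laguerrePoly_one]
  | succ m ih =>
    have h := congrArg (eval x) (wronskian_laguerrePoly_succ β m)
    simp only [eval_mul, eval_C, eval_sub, eval_pow] at h
    have hm : (0 : ℝ) < m + 1 + 1 := by positivity
    have hmβ : (0 : ℝ) < m + 1 + β := by linarith [(Nat.cast_nonneg m : (0 : ℝ) ≤ m)]
    nlinarith [sq_nonneg ((laguerrePoly β (m + 1)).eval x)]

end Laguerre

theorem R_interlace_with_L_nsub1 (α a : ℝ) (hα : α > -1) (ha : a ≠ -1) (n : ℕ)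
    (hn : 1 ≤ n)
    (R : ℝ → ℝ) (hR : ∀ x, R x = laguerre α n x + a * laguerre (α + 1) n x)
    (z z' : ℝ) (hlt : z < z') (hz : laguerre (α + 1) (n - 1) z = 0)
    (hz' : laguerre (α + 1) (n - 1) z' = 0)
    (hcons : ∀ u ∈ Set.Ioo z z', laguerre (α + 1) (n - 1) u ≠ 0) :
    R z * R z' < 0 ∧ ∃! w, w ∈ Set.Ioo z z' ∧ R w = 0 := by
  obtain ⟨m, rfl⟩ : ∃ m, n = m + 1 := ⟨n - 1, by omega⟩
  simp only [Nat.add_sub_cancel, laguerre_eq_eval] at hz hz' hcons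
  have hR' : R = fun x ↦
      (C (1 + a) * laguerrePoly (α + 1) (m + 1) - laguerrePoly (α + 1) m).eval x := by
    ext x
    rw [hR, laguerre_eq_eval, laguerre_eq_eval, laguerrePoly_succ]
    simp only [eval_sub, eval_mul, eval_C]
    ring
  subst hR'
  have hc : 1 + a ≠ 0 := by contrapose! ha; linarith
  have hW : ∀ x,
      (wronskian (laguerrePoly (α + 1) m) (laguerrePoly (α + 1) (m + 1))).eval x < 0 :=
    eval_wronskian_laguerrePoly_neg _ (by linarith) m
  exact ⟨eval_C_mul_sub_mul_eval_neg_of_wronskian_neg hc hlt hz hz' hcons (hW z) (hW z'),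
    existsUnique_mem_Ioo_eval_C_mul_sub_eq_zero_of_wronskian_neg hc hlt hz hz' hcons
      fun x _ ↦ hW x⟩
end

section
/- There exist n, α, a with α > -1 and a ≠ 0 such that the zeros of R_n(x) = L_n^α(x) + a·L_n^{α+1}(x) do NOT interlace with the zeros of L_{n-1}^α. Concretely, for n = 5, α = 1.45, a = 2.33, the second-largest zero of R_5 is smaller than the largest zero of L_4^{1.45} while the largest zero of R_5 exceeds it, but the interlacing pattern fails (e.g., two zeros of R_5 lie between consecutive zeros of L_4^{1.45}). -/
open Finset

lemma laguerre_continuous (α : ℝ) (n : ℕ) : Continuous (fun x => laguerre α n x) := by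
  unfold laguerre; fun_prop

lemma lag4_eq (u : ℝ) : laguerre (29/20) 4 u =
    10933027/1280000 - 223123/16000*u + 9701/1600*u^2 - 109/120*u^3 + 1/24*u^4 := by
  simp [laguerre, Finset.sum_range_succ, Finset.prod_range_succ, Nat.factorial]
  ring

lemma lag4_mid_pos (u : ℝ) (h1 : 2.99 ≤ u) (h2 : u ≤ 6) : 0 < laguerre (29/20) 4 u := by
  rw [lag4_eq]
  nlinarith [mul_nonneg (sub_nonneg.2 h1) (sub_nonneg.2 h2), sq_nonneg (u-3),
    sq_nonneg (u-4), sq_nonneg (u-5), sq_nonneg (u-6),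
    mul_nonneg (mul_nonneg (sub_nonneg.2 h1) (sub_nonneg.2 h1)) (sub_nonneg.2 h2),
    sq_nonneg ((u-3)*(u-6)), sq_nonneg ((u-2.99)*(u-6))]

lemma lag5_eq (u : ℝ) : laguerre (29/20) 5 u =
    1410360483/128000000 - 28782867/1280000*u + 417143/32000*u^2 - 4687/1600*u^3
      + 43/160*u^4 - 1/120*u^5 := by
  simp [laguerre, Finset.sum_range_succ, Finset.prod_range_succ, Nat.factorial]
  ring

lemma lag5'_eq (u : ℝ) : laguerre (29/20 + 1) 5 u =
    4288647183/128000000 - 62154307/1280000*u + 698363/32000*u^2 - 6407/1600*u^3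
      + 149/480*u^4 - 1/120*u^5 := by
  simp [laguerre, Finset.sum_range_succ, Finset.prod_range_succ, Nat.factorial]
  ring

theorem R_not_interlacing_with_L_nsub1_counterexample :
    ∃ (n : ℕ) (α a : ℝ), α > -1 ∧ a ≠ 0 ∧
      ∃ x x' : ℝ, x < x' ∧ laguerre α (n - 1) x = 0 ∧ laguerre α (n - 1) x' = 0 ∧
        (∀ u ∈ Set.Ioo x x', laguerre α (n - 1) u ≠ 0) ∧
        ∃ z z' : ℝ, z ≠ z' ∧ z ∈ Set.Ioo x x' ∧ z' ∈ Set.Ioo x x' ∧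
          laguerre α n z + a * laguerre (α + 1) n z = 0 ∧
          laguerre α n z' + a * laguerre (α + 1) n z' = 0 := by
  refine ⟨5, 29/20, 233/100, by norm_num, by norm_num, ?_⟩
  have hcont : Continuous (fun t => laguerre (29/20) 4 t) := laguerre_continuous _ _
  -- sign evaluations of L_4
  have e1 : laguerre (29/20) 4 (2.9) < 0 := by
    norm_num [laguerre, Finset.sum_range_succ, Finset.prod_range_succ, Nat.factorial]
  have e2 : 0 < laguerre (29/20) 4 (2.99) := by
    norm_num [laguerre, Finset.sum_range_succ, Finset.prod_range_succ, Nat.factorial]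
  have e3 : 0 < laguerre (29/20) 4 (6 : ℝ) := by
    norm_num [laguerre, Finset.sum_range_succ, Finset.prod_range_succ, Nat.factorial]
  have e4 : laguerre (29/20) 4 (6.5 : ℝ) < 0 := by
    norm_num [laguerre, Finset.sum_range_succ, Finset.prod_range_succ, Nat.factorial]
  -- x : largest zero in [2.9, 2.99]
  set S : Set ℝ := Set.Icc (2.9 : ℝ) 2.99 ∩ (fun t => laguerre (29/20) 4 t) ⁻¹' {0} with hS
  have hSne : S.Nonempty := by
    have := intermediate_value_Icc (by norm_num : (2.9:ℝ) ≤ 2.99) hcont.continuousOn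
    have h0 : (0:ℝ) ∈ Set.Icc (laguerre (29/20) 4 (2.9)) (laguerre (29/20) 4 (2.99)) :=
      ⟨le_of_lt e1, le_of_lt e2⟩
    obtain ⟨t, ht, htz⟩ := this h0
    exact ⟨t, ht, htz⟩
  have hScomp : IsCompact S :=
    isCompact_Icc.inter_right (isClosed_singleton.preimage hcont)
  have hSbdd : BddAbove S := hScomp.bddAbove
  set x := sSup S with hxdef
  have hxS : x ∈ S := hScomp.sSup_mem hSne
  have hx_zero : laguerre (29/20) 4 x = 0 := hxS.2
  have hx_ge : (2.9:ℝ) ≤ x := hxS.1.1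
  have hx_lt : x < 2.99 := lt_of_le_of_ne hxS.1.2 (by intro h; rw [h] at hx_zero; linarith)
  -- x' : smallest zero in [6, 6.5]
  set T : Set ℝ := Set.Icc (6 : ℝ) 6.5 ∩ (fun t => laguerre (29/20) 4 t) ⁻¹' {0} with hT
  have hTne : T.Nonempty := by
    have := intermediate_value_Icc' (by norm_num : (6:ℝ) ≤ 6.5) hcont.continuousOn
    have h0 : (0:ℝ) ∈ Set.Icc (laguerre (29/20) 4 (6.5)) (laguerre (29/20) 4 (6:ℝ)) :=
      ⟨le_of_lt e4, le_of_lt e3⟩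
    obtain ⟨t, ht, htz⟩ := this h0
    exact ⟨t, ht, htz⟩
  have hTcomp : IsCompact T :=
    isCompact_Icc.inter_right (isClosed_singleton.preimage hcont)
  have hTbdd : BddBelow T := hTcomp.bddBelow
  set x' := sInf T with hx'def
  have hx'T : x' ∈ T := hTcomp.sInf_mem hTne
  have hx'_zero : laguerre (29/20) 4 x' = 0 := hx'T.2
  have hx'_le : x' ≤ 6.5 := hx'T.1.2
  have hx'_gt : (6:ℝ) < x' := lt_of_le_of_ne hx'T.1.1 (by
    intro h; rw [← h] at hx'_zero; linarith)
  have hxx' : x < x' := by linarith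
  refine ⟨x, x', hxx', hx_zero, hx'_zero, ?_, ?_⟩
  · -- no zero of L_4 strictly between x and x'
    rintro u ⟨hu1, hu2⟩ hz
    rcases le_total u 2.99 with h | h
    · have huS : u ∈ S := ⟨⟨by linarith, h⟩, hz⟩
      exact absurd (le_csSup hSbdd huS) (not_le.2 hu1)
    · rcases le_total u 6 with h' | h'
      · exact absurd hz (ne_of_gt (lag4_mid_pos u h h'))
      · have huT : u ∈ T := ⟨⟨h', by linarith⟩, hz⟩
        exact absurd (csInf_le hTbdd huT) (not_le.2 hu2)
  · -- two zeros of R in (x, x')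
    set R : ℝ → ℝ := fun t => laguerre (29/20) 5 t + 233/100 * laguerre (29/20 + 1) 5 t with hR
    have hRcont : Continuous R := by
      exact (laguerre_continuous _ _).add (continuous_const.mul (laguerre_continuous _ _))
    have r1 : R 3 < 0 := by
      simp only [hR]; rw [lag5_eq, lag5'_eq]; norm_num
    have r2 : 0 < R 3.1 := by
      simp only [hR]; rw [lag5_eq, lag5'_eq]; norm_num
    have r3 : 0 < R 5.7 := by
      simp only [hR]; rw [lag5_eq, lag5'_eq]; norm_num
    have r4 : R 5.9 < 0 := by
      simp only [hR]; rw [lag5_eq, lag5'_eq]; norm_num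
    obtain ⟨z, hzmem, hzz⟩ := intermediate_value_Icc (by norm_num : (3:ℝ) ≤ 3.1)
      hRcont.continuousOn ⟨le_of_lt r1, le_of_lt r2⟩
    obtain ⟨z', hz'mem, hz'z⟩ := intermediate_value_Icc' (by norm_num : (5.7:ℝ) ≤ 5.9)
      hRcont.continuousOn ⟨le_of_lt r4, le_of_lt r3⟩
    refine ⟨z, z', by nlinarith [hzmem.2, hz'mem.1], ⟨?_, ?_⟩, ⟨?_, ?_⟩, hzz, hz'z⟩
    · linarith [hzmem.1]
    · linarith [hzmem.2]
    · linarith [hz'mem.1]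
    · linarith [hz'mem.2]
end
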